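/- Let a, b, c and (l_ij), (m_ij) and F be as in the generalized Monge–Ampère setup. If p and p̃ are twice continuously differentiable biperiodic functions on ℝ², each satisfying the generalized Monge–Ampère equation (GMA) and the ellipticity condition (E), then p − p̃ is a constant function. -/

import Mathlib

open MeasureTheory

/-- Partial derivative in the first variable. -/
noncomputable def pdx (p : ℝ × ℝ → ℝ) (z : ℝ × ℝ) : ℝ := fderiv ℝ p z (1, 0)

/-- Partial derivative in the second variable. -/
noncomputable def pdy (p : ℝ × ℝ → ℝ) (z : ℝ × ℝ) : ℝ := fderiv ℝ p z (0, 1)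

/-- A function `ℝ² → ℝ` is biperiodic if it has period 1 in each variable. -/
def Biperiodic (p : ℝ × ℝ → ℝ) : Prop :=
  ∀ x y : ℝ, p (x + 1, y) = p (x, y) ∧ p (x, y + 1) = p (x, y)

/-- The integral over the torus `𝕋² = ℝ²/ℤ²` of (the descent of) a biperiodic function. -/
noncomputable def torusInt (f : ℝ × ℝ → ℝ) : ℝ := ∫ x in (0:ℝ)..1, ∫ y in (0:ℝ)..1, f (x, y)

/-!
Put `u = p - q`. The matrices of (E) for `p` and `q` differ by the shifted Hessian
`S u = ∇²u - u_x L - u_y M`, where `L = (lᵢⱼ)`, `M = (mᵢⱼ)`. Two positive definite `2 × 2`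
matrices with the same determinant `e^F` have a difference of nonpositive determinant, which
vanishes only when they are equal; so `det S u ≤ 0`. On the other hand `∫_{𝕋²} det S u = 0`:
`det ∇²u` is a null Lagrangian, the terms linear in `∇u` integrate to zero by parts, and the term
quadratic in `∇u` is `det (u_x L + u_y M)`, which vanishes by the conditions on `(lᵢⱼ), (mᵢⱼ)`.
Hence `S u = 0`: the Hessian of `u` is a linear function of `∇u`. Since `∇u` vanishes at a
maximum of `u`, uniqueness for linear ODEs along horizontal and vertical lines gives `∇u = 0`.
-/

open Set Filter

section PartialDerivatives

variable {f g : ℝ × ℝ → ℝ}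

theorem hasDerivAt_pdx {x y : ℝ} (hf : DifferentiableAt ℝ f (x, y)) :
    HasDerivAt (fun t => f (t, y)) (pdx f (x, y)) x := by
  simpa [Function.comp_def, pdx] using
    hf.hasFDerivAt.comp_hasDerivAt x ((hasDerivAt_id x).prodMk (hasDerivAt_const x y))

theorem hasDerivAt_pdy {x y : ℝ} (hf : DifferentiableAt ℝ f (x, y)) :
    HasDerivAt (fun t => f (x, t)) (pdy f (x, y)) y := by
  simpa [Function.comp_def, pdy] using
    hf.hasFDerivAt.comp_hasDerivAt y ((hasDerivAt_const y x).prodMk (hasDerivAt_id y))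

theorem ContDiff.contDiff_pdx {m n : WithTop ℕ∞} (hf : ContDiff ℝ n f) (hmn : m + 1 ≤ n) :
    ContDiff ℝ m (pdx f) :=
  (hf.fderiv_right hmn).clm_apply contDiff_const

theorem ContDiff.contDiff_pdy {m n : WithTop ℕ∞} (hf : ContDiff ℝ n f) (hmn : m + 1 ≤ n) :
    ContDiff ℝ m (pdy f) :=
  (hf.fderiv_right hmn).clm_apply contDiff_const

theorem ContDiff.continuous_pdx (hf : ContDiff ℝ 1 f) : Continuous (pdx f) :=
  (hf.contDiff_pdx (m := 0) le_rfl).continuous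

theorem ContDiff.continuous_pdy (hf : ContDiff ℝ 1 f) : Continuous (pdy f) :=
  (hf.contDiff_pdy (m := 0) le_rfl).continuous

theorem ContDiff.differentiable_pdx (hf : ContDiff ℝ 2 f) : Differentiable ℝ (pdx f) :=
  (hf.contDiff_pdx (m := 1) le_rfl).differentiable one_ne_zero

theorem ContDiff.differentiable_pdy (hf : ContDiff ℝ 2 f) : Differentiable ℝ (pdy f) :=
  (hf.contDiff_pdy (m := 1) le_rfl).differentiable one_ne_zero

theorem pdx_pdy_comm (hf : ContDiff ℝ 2 f) : pdx (pdy f) = pdy (pdx f) := by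
  ext z
  have hdf : DifferentiableAt ℝ (fderiv ℝ f) z :=
    (hf.fderiv_right (m := 1) le_rfl).differentiable one_ne_zero z
  show fderiv ℝ (fun w => fderiv ℝ f w (0, 1)) z (1, 0) =
    fderiv ℝ (fun w => fderiv ℝ f w (1, 0)) z (0, 1)
  rw [fderiv_clm_apply hdf (differentiableAt_const _),
    fderiv_clm_apply hdf (differentiableAt_const _)]
  simpa using hf.contDiffAt.isSymmSndFDerivAt (by simp) (1, 0) (0, 1)

theorem pdx_sub (hf : Differentiable ℝ f) (hg : Differentiable ℝ g) :
    pdx (fun z => f z - g z) = fun z => pdx f z - pdx g z := by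
  ext z
  simp [pdx, fderiv_fun_sub (hf z) (hg z)]

theorem pdy_sub (hf : Differentiable ℝ f) (hg : Differentiable ℝ g) :
    pdy (fun z => f z - g z) = fun z => pdy f z - pdy g z := by
  ext z
  simp [pdy, fderiv_fun_sub (hf z) (hg z)]

theorem pdx_mul (hf : Differentiable ℝ f) (hg : Differentiable ℝ g) :
    pdx (fun z => f z * g z) = fun z => pdx f z * g z + f z * pdx g z := by
  ext z
  simp only [pdx, fderiv_fun_mul (hf z) (hg z), add_apply, smul_apply, smul_eq_mul]
  ring

theorem pdy_mul (hf : Differentiable ℝ f) (hg : Differentiable ℝ g) :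
    pdy (fun z => f z * g z) = fun z => pdy f z * g z + f z * pdy g z := by
  ext z
  simp only [pdy, fderiv_fun_mul (hf z) (hg z), add_apply, smul_apply, smul_eq_mul]
  ring

theorem pdx_comp_add_snd (c : ℝ) :
    pdx (fun z => f (z.1, z.2 + c)) = fun z => pdx f (z.1, z.2 + c) := by
  have h : ∀ z : ℝ × ℝ, (z.1, z.2 + c) = z + (0, c) := fun z => by ext <;> simp
  simp only [h]
  ext z
  simp [pdx, fderiv_comp_add_right]

theorem sub_eq_mul_integral_pdy (hf : ContDiff ℝ 1 f) (x y h : ℝ) :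
    f (x, y + h) - f (x, y) = h * ∫ s in (0 : ℝ)..1, pdy f (x, y + s * h) := by
  have hc : Continuous (pdy f) := hf.continuous_pdy
  have hderiv : ∀ s, HasDerivAt (fun s => f (x, y + s * h)) (h * pdy f (x, y + s * h)) s :=
    fun s => by
      have := (hasDerivAt_pdy (hf.differentiable one_ne_zero (x, y + s * h))).comp s
        (((hasDerivAt_id s).mul_const h).const_add y)
      simpa [Function.comp_def, mul_comm] using this
  rw [← intervalIntegral.integral_const_mul, intervalIntegral.integral_eq_sub_of_hasDerivAt
    (fun s _ => hderiv s) (Continuous.intervalIntegrable (by fun_prop) 0 1)]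
  simp

theorem fderiv_eq_zero_of_pdx_of_pdy {z : ℝ × ℝ} (hx : pdx f z = 0) (hy : pdy f z = 0) :
    fderiv ℝ f z = 0 := by
  ext
  · simpa [pdx] using hx
  · simpa [pdy] using hy

end PartialDerivatives

namespace Biperiodic

variable {f g : ℝ × ℝ → ℝ}

theorem comp_add_fst (hf : Biperiodic f) : (fun z => f (z + (1, 0))) = f := by
  ext ⟨x, y⟩
  simpa using (hf x y).1

theorem comp_add_snd (hf : Biperiodic f) : (fun z => f (z + (0, 1))) = f := by
  ext ⟨x, y⟩
  simpa using (hf x y).2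

theorem fderiv_apply (hf : Biperiodic f) (v : ℝ × ℝ) :
    Biperiodic fun z => fderiv ℝ f z v := by
  intro x y
  constructor
  · simpa [fderiv_comp_add_right] using
      congrArg (fun g => fderiv ℝ g (x, y) v) hf.comp_add_fst
  · simpa [fderiv_comp_add_right] using
      congrArg (fun g => fderiv ℝ g (x, y) v) hf.comp_add_snd

theorem pdx (hf : Biperiodic f) : Biperiodic (pdx f) := hf.fderiv_apply (1, 0)

theorem pdy (hf : Biperiodic f) : Biperiodic (pdy f) := hf.fderiv_apply (0, 1)

theorem sub (hf : Biperiodic f) (hg : Biperiodic g) : Biperiodic fun z => f z - g z :=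
  fun x y => ⟨by simp only [(hf x y).1, (hg x y).1], by simp only [(hf x y).2, (hg x y).2]⟩

theorem mul (hf : Biperiodic f) (hg : Biperiodic g) : Biperiodic fun z => f z * g z :=
  fun x y => ⟨by simp only [(hf x y).1, (hg x y).1], by simp only [(hf x y).2, (hg x y).2]⟩

theorem comp_add_snd_const (hf : Biperiodic f) (c : ℝ) : Biperiodic fun z => f (z.1, z.2 + c) :=
  fun x y => ⟨(hf x (y + c)).1, by
    show f (x, y + 1 + c) = f (x, y + c)
    rw [add_right_comm, (hf x (y + c)).2]⟩

theorem exists_mem_Icc (hf : Biperiodic f) (z : ℝ × ℝ) :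
    ∃ w ∈ Icc (0 : ℝ) 1 ×ˢ Icc (0 : ℝ) 1, f w = f z := by
  obtain ⟨x, hx, hfx⟩ := Function.Periodic.exists_mem_Ico₀ (c := 1)
    (f := fun t => f (t, z.2)) (fun t => (hf t z.2).1) one_pos z.1
  obtain ⟨y, hy, hfy⟩ := Function.Periodic.exists_mem_Ico₀ (c := 1)
    (f := fun t => f (x, t)) (fun t => (hf x t).2) one_pos z.2
  exact ⟨(x, y), ⟨Ico_subset_Icc_self hx, Ico_subset_Icc_self hy⟩, hfy.symm.trans hfx.symm⟩

theorem exists_forall_ge (hf : Biperiodic f) (hc : Continuous f) :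
    ∃ z₀, ∀ z, f z ≤ f z₀ := by
  obtain ⟨z₀, -, hz₀⟩ := (isCompact_Icc.prod isCompact_Icc).exists_isMaxOn
    ((nonempty_Icc.2 zero_le_one).prod (nonempty_Icc.2 zero_le_one)) hc.continuousOn
  refine ⟨z₀, fun z => ?_⟩
  obtain ⟨w, hw, hfw⟩ := hf.exists_mem_Icc z
  exact hfw ▸ hz₀ hw

theorem exists_fderiv_eq_zero (hf : Biperiodic f) (hc : Continuous f) :
    ∃ z₀, fderiv ℝ f z₀ = 0 :=
  let ⟨z₀, hz₀⟩ := hf.exists_forall_ge hc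
  ⟨z₀, IsLocalMax.fderiv_eq_zero (Eventually.of_forall hz₀)⟩

end Biperiodic

section TorusIntegral

variable {f g : ℝ × ℝ → ℝ}

theorem continuous_torusInt {X : Type*} [TopologicalSpace X] {F : X → ℝ × ℝ → ℝ}
    (hF : Continuous (Function.uncurry F)) : Continuous fun a => torusInt (F a) := by
  refine intervalIntegral.continuous_parametric_intervalIntegral_of_continuous' ?_ 0 1
  refine intervalIntegral.continuous_parametric_intervalIntegral_of_continuous'
    (f := fun q : X × ℝ => fun y => F q.1 (q.2, y)) ?_ 0 1
  exact hF.comp (continuous_fst.fst.prodMk (continuous_fst.snd.prodMk continuous_snd))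

theorem continuous_integral_snd (hf : Continuous f) :
    Continuous fun x => ∫ y in (0 : ℝ)..1, f (x, y) :=
  intervalIntegral.continuous_parametric_intervalIntegral_of_continuous'
    (f := fun x y => f (x, y)) hf 0 1

theorem torusInt_add (hf : Continuous f) (hg : Continuous g) :
    torusInt (fun z => f z + g z) = torusInt f + torusInt g := by
  unfold torusInt
  rw [← intervalIntegral.integral_add ((continuous_integral_snd hf).intervalIntegrable 0 1)
    ((continuous_integral_snd hg).intervalIntegrable 0 1)]
  congr 1 with x
  exact intervalIntegral.integral_add (Continuous.intervalIntegrable (by fun_prop) 0 1)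
    (Continuous.intervalIntegrable (by fun_prop) 0 1)

theorem torusInt_const_mul (c : ℝ) (f : ℝ × ℝ → ℝ) :
    torusInt (fun z => c * f z) = c * torusInt f := by
  simp [torusInt, intervalIntegral.integral_const_mul]

theorem torusInt_neg (f : ℝ × ℝ → ℝ) : torusInt (fun z => -f z) = -torusInt f := by
  simp [torusInt, intervalIntegral.integral_neg]

theorem torusInt_sub (hf : Continuous f) (hg : Continuous g) :
    torusInt (fun z => f z - g z) = torusInt f - torusInt g := by
  rw [show (fun z => f z - g z) = fun z => f z + -1 * g z by ext; ring,
    torusInt_add hf (by fun_prop), torusInt_const_mul]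
  ring

theorem torusInt_mul_add_mul {h : ℝ × ℝ → ℝ} (hf : Continuous f) (hg : Continuous g)
    (hh : Continuous h) (α β : ℝ) :
    torusInt (fun z => h z * (α * f z + β * g z)) =
      α * torusInt (fun z => h z * f z) + β * torusInt (fun z => h z * g z) := by
  simp_rw [mul_add, mul_left_comm (h _)]
  rw [torusInt_add (by fun_prop) (by fun_prop), torusInt_const_mul, torusInt_const_mul]

theorem torusInt_eq_integral_swap (hf : Continuous f) :
    torusInt f = ∫ y in (0 : ℝ)..1, ∫ x in (0 : ℝ)..1, f (x, y) :=
  intervalIntegral_intervalIntegral_swap <|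
    (hf.continuousOn.integrableOn_compact (isCompact_uIcc.prod isCompact_uIcc)).mono_set
      (prod_mono uIoc_subset_uIcc uIoc_subset_uIcc)

theorem torusInt_comp_add_snd (hf : Biperiodic f) (c : ℝ) :
    torusInt (fun z => f (z.1, z.2 + c)) = torusInt f := by
  unfold torusInt
  congr 1 with x
  have hper : Function.Periodic (fun y => f (x, y)) 1 := fun y => (hf x y).2
  rw [intervalIntegral.integral_comp_add_right (fun y => f (x, y)), zero_add, add_comm,
    hper.intervalIntegral_add_eq c 0, zero_add]

theorem torusInt_pdy_eq_zero (hf : ContDiff ℝ 1 f) (hper : Biperiodic f) :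
    torusInt (pdy f) = 0 := by
  have hc : Continuous (pdy f) := hf.continuous_pdy
  have hx : ∀ x, ∫ y in (0 : ℝ)..1, pdy f (x, y) = 0 := fun x => by
    rw [intervalIntegral.integral_eq_sub_of_hasDerivAt
      (fun y _ => hasDerivAt_pdy (hf.differentiable one_ne_zero _))
      (Continuous.intervalIntegrable (by fun_prop) 0 1),
      ← (hper x 0).2, zero_add, sub_self]
  simp [torusInt, hx]

theorem torusInt_pdx_eq_zero (hf : ContDiff ℝ 1 f) (hper : Biperiodic f) :
    torusInt (pdx f) = 0 := by
  have hc : Continuous (pdx f) := hf.continuous_pdx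
  have hy : ∀ y, ∫ x in (0 : ℝ)..1, pdx f (x, y) = 0 := fun y => by
    rw [intervalIntegral.integral_eq_sub_of_hasDerivAt
      (fun x _ => hasDerivAt_pdx (hf.differentiable one_ne_zero _))
      (Continuous.intervalIntegrable (by fun_prop) 0 1),
      ← (hper 0 y).1, zero_add, sub_self]
  simp [torusInt_eq_integral_swap hc, hy]

end TorusIntegral

section IntegrationByParts

variable {f g : ℝ × ℝ → ℝ}

theorem torusInt_pdx_mul (hf : ContDiff ℝ 1 f) (hg : ContDiff ℝ 1 g) (hfp : Biperiodic f)
    (hgp : Biperiodic g) :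
    torusInt (fun z => pdx f z * g z) = -torusInt (fun z => f z * pdx g z) := by
  have hf' : Continuous (pdx f) := hf.continuous_pdx
  have hg' : Continuous (pdx g) := hg.continuous_pdx
  have h := torusInt_pdx_eq_zero (hf.mul hg) (hfp.mul hgp)
  rw [pdx_mul (hf.differentiable one_ne_zero) (hg.differentiable one_ne_zero),
    torusInt_add (hf'.fun_mul hg.continuous) (hf.continuous.fun_mul hg')] at h
  linarith

theorem torusInt_pdy_mul (hf : ContDiff ℝ 1 f) (hg : ContDiff ℝ 1 g) (hfp : Biperiodic f)
    (hgp : Biperiodic g) :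
    torusInt (fun z => pdy f z * g z) = -torusInt (fun z => f z * pdy g z) := by
  have hf' : Continuous (pdy f) := hf.continuous_pdy
  have hg' : Continuous (pdy g) := hg.continuous_pdy
  have h := torusInt_pdy_eq_zero (hf.mul hg) (hfp.mul hgp)
  rw [pdy_mul (hf.differentiable one_ne_zero) (hg.differentiable one_ne_zero),
    torusInt_add (hf'.fun_mul hg.continuous) (hf.continuous.fun_mul hg')] at h
  linarith

theorem torusInt_pdx_mul_self (hf : ContDiff ℝ 1 f) (hfp : Biperiodic f) :
    torusInt (fun z => pdx f z * f z) = 0 := by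
  have h := torusInt_pdx_mul hf hf hfp hfp
  simp_rw [mul_comm (f _)] at h
  linarith

theorem torusInt_pdy_mul_self (hf : ContDiff ℝ 1 f) (hfp : Biperiodic f) :
    torusInt (fun z => pdy f z * f z) = 0 := by
  have h := torusInt_pdy_mul hf hf hfp hfp
  simp_rw [mul_comm (f _)] at h
  linarith

end IntegrationByParts

theorem intervalIntegral_pos_of_continuous {f : ℝ → ℝ} {a b t : ℝ} (hab : a < b)
    (hf : Continuous f) (hnn : 0 ≤ f) (ht : t ∈ Icc a b) (hft : f t ≠ 0) :
    0 < ∫ x in a..b, f x := by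
  rw [intervalIntegral.integral_pos_iff_support_of_nonneg_ae' (Eventually.of_forall hnn)
    (hf.intervalIntegrable a b)]
  refine ⟨hab, ?_⟩
  rw [← closure_Ioo hab.ne] at ht
  obtain ⟨s, hs⟩ := mem_closure_iff.1 ht _ hf.isOpen_support hft
  refine lt_of_lt_of_le ((hf.isOpen_support.inter isOpen_Ioo).measure_pos volume ⟨s, hs⟩) ?_
  exact measure_mono (inter_subset_inter_right _ Ioo_subset_Ioc_self)

theorem Biperiodic.eq_zero_of_torusInt_eq_zero {f : ℝ × ℝ → ℝ} (hper : Biperiodic f)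
    (hf : Continuous f) (hnn : 0 ≤ f) (h : torusInt f = 0) : f = 0 := by
  ext z
  obtain ⟨⟨x, y⟩, ⟨hx, hy⟩, hfz⟩ := hper.exists_mem_Icc z
  by_contra hne
  rw [← hfz] at hne
  have hslice : 0 < ∫ t in (0 : ℝ)..1, f (x, t) :=
    intervalIntegral_pos_of_continuous one_pos (by fun_prop) (fun t => hnn (x, t)) hy hne
  have : 0 < torusInt f :=
    intervalIntegral_pos_of_continuous one_pos (continuous_integral_snd hf)
      (fun s => intervalIntegral.integral_nonneg zero_le_one fun t _ => hnn (s, t))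
      hx hslice.ne'
  exact this.ne' h

section NullLagrangian

variable {u : ℝ × ℝ → ℝ}

theorem torusInt_pdx_pdx_comp_add_snd_mul_pdy (hu : ContDiff ℝ 2 u) (hper : Biperiodic u)
    (c : ℝ) :
    torusInt (fun z => pdx (pdx u) (z.1, z.2 + c) * pdy u z) =
      -torusInt (fun z => pdx u (z.1, z.2 + c) * pdy (pdx u) z) := by
  have hux : ContDiff ℝ 1 (pdx u) := hu.contDiff_pdx (by norm_num)
  have h := torusInt_pdx_mul (f := fun z => pdx u (z.1, z.2 + c)) (hux.comp (by fun_prop))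
    (hu.contDiff_pdy (by norm_num)) (hper.pdx.comp_add_snd_const c) hper.pdy
  rwa [pdx_comp_add_snd, pdx_pdy_comm hu] at h

/- `u` is only `C²`, so this cannot be obtained by integrating by parts twice. Instead,
`Φ h = ∫ u_xx(z) u_y(z + h e₂)` satisfies `Φ h - Φ 0 = h K₁ h` directly and `Φ h - Φ 0 = h K₂ h`
after one integration by parts in `x`; `K₁` and `K₂` are continuous, and at `h = 0` they are the
two sides of the identity. -/
theorem torusInt_pdx_pdx_mul_pdy_pdy (hu : ContDiff ℝ 2 u) (hper : Biperiodic u) :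
    torusInt (fun z => pdx (pdx u) z * pdy (pdy u) z) =
      torusInt (fun z => pdy (pdx u) z ^ 2) := by
  have hux : ContDiff ℝ 1 (pdx u) := hu.contDiff_pdx (by norm_num)
  have huy : ContDiff ℝ 1 (pdy u) := hu.contDiff_pdy (by norm_num)
  have hA : Continuous (pdx (pdx u)) := hux.continuous_pdx
  have hB : Continuous (pdy (pdy u)) := huy.continuous_pdy
  have hC : Continuous (pdy (pdx u)) := hux.continuous_pdy
  set Φ : ℝ → ℝ := fun h => torusInt fun z => pdx (pdx u) z * pdy u (z.1, z.2 + h)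
  set K₁ : ℝ → ℝ := fun h => torusInt fun z =>
    pdx (pdx u) z * ∫ s in (0 : ℝ)..1, pdy (pdy u) (z.1, z.2 + s * h)
  set K₂ : ℝ → ℝ := fun h => torusInt fun z =>
    pdy (pdx u) z * ∫ s in (0 : ℝ)..1, pdy (pdx u) (z.1, z.2 - h + s * h)
  have h₁ : ∀ h, Φ h - Φ 0 = h * K₁ h := fun h => by
    simp only [Φ, K₁, add_zero, Prod.mk.eta]
    rw [← torusInt_sub (by fun_prop) (by fun_prop), ← torusInt_const_mul]
    congr 1 with z
    rw [← mul_sub, sub_eq_mul_integral_pdy huy]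
    ring
  have hΦ : ∀ h, Φ h = -torusInt fun z => pdx u (z.1, z.2 - h) * pdy (pdx u) z := fun h => by
    simp only [Φ, sub_eq_add_neg, ← torusInt_pdx_pdx_comp_add_snd_mul_pdy hu hper]
    rw [← torusInt_comp_add_snd ((hper.pdx.pdx.comp_add_snd_const (-h)).mul hper.pdy) h]
    simp
  have h₂ : ∀ h, Φ h - Φ 0 = h * K₂ h := fun h => by
    simp only [hΦ, K₂, sub_zero, Prod.mk.eta]
    rw [neg_sub_neg, ← torusInt_sub (by fun_prop) (by fun_prop), ← torusInt_const_mul]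
    congr 1 with z
    have := sub_eq_mul_integral_pdy hux z.1 (z.2 - h) h
    rw [sub_add_cancel, Prod.mk.eta] at this
    rw [← sub_mul, this]
    ring
  have hK₁ : Continuous K₁ := continuous_torusInt (by fun_prop)
  have hK₂ : Continuous K₂ := continuous_torusInt (by fun_prop)
  have hK : K₁ = K₂ := hK₁.ext_on (dense_compl_singleton 0) hK₂ fun h hh =>
    mul_left_cancel₀ hh ((h₁ h).symm.trans (h₂ h))
  simpa [K₁, K₂, sq] using congrFun hK 0

end NullLagrangian

section CrossTerms

variable {u : ℝ × ℝ → ℝ}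

theorem torusInt_pdy_pdx_mul_pdx (hu : ContDiff ℝ 2 u) (hper : Biperiodic u) :
    torusInt (fun z => pdy (pdx u) z * pdx u z) = 0 :=
  torusInt_pdy_mul_self (hu.contDiff_pdx (by norm_num)) hper.pdx

theorem torusInt_pdy_pdx_mul_pdy (hu : ContDiff ℝ 2 u) (hper : Biperiodic u) :
    torusInt (fun z => pdy (pdx u) z * pdy u z) = 0 := by
  rw [← pdx_pdy_comm hu]
  exact torusInt_pdx_mul_self (hu.contDiff_pdy (by norm_num)) hper.pdy

theorem torusInt_pdx_pdx_mul_pdy (hu : ContDiff ℝ 2 u) (hper : Biperiodic u) :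
    torusInt (fun z => pdx (pdx u) z * pdy u z) = 0 := by
  rw [torusInt_pdx_mul (hu.contDiff_pdx (by norm_num)) (hu.contDiff_pdy (by norm_num))
    hper.pdx hper.pdy, pdx_pdy_comm hu]
  simp_rw [mul_comm (pdx u _)]
  rw [torusInt_pdy_pdx_mul_pdx hu hper, neg_zero]

theorem torusInt_pdy_pdy_mul_pdx (hu : ContDiff ℝ 2 u) (hper : Biperiodic u) :
    torusInt (fun z => pdy (pdy u) z * pdx u z) = 0 := by
  rw [torusInt_pdy_mul (hu.contDiff_pdy (by norm_num)) (hu.contDiff_pdx (by norm_num))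
    hper.pdy hper.pdx]
  simp_rw [mul_comm (pdy u _)]
  rw [torusInt_pdy_pdx_mul_pdy hu hper, neg_zero]

end CrossTerms

section ShiftedHessian

variable (L M : Matrix (Fin 2) (Fin 2) ℝ)

/-- With `L = (lᵢⱼ)` and `M = (mᵢⱼ)`, the matrix of (E) is `!![a, c; c, b] + shiftedHessian L M p z`
and (GMA) says that its determinant is `e^F`. -/
noncomputable def shiftedHessian (u : ℝ × ℝ → ℝ) (z : ℝ × ℝ) :
    Matrix (Fin 2) (Fin 2) ℝ :=
  !![pdx (pdx u) z, pdy (pdx u) z; pdy (pdx u) z, pdy (pdy u) z] - pdx u z • L - pdy u z • M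

variable {L M} {u : ℝ × ℝ → ℝ}

theorem continuous_shiftedHessian (hu : ContDiff ℝ 2 u) : Continuous (shiftedHessian L M u) := by
  have hux : ContDiff ℝ 1 (pdx u) := hu.contDiff_pdx (by norm_num)
  have huy : ContDiff ℝ 1 (pdy u) := hu.contDiff_pdy (by norm_num)
  have hA : Continuous (pdx (pdx u)) := hux.continuous_pdx
  have hB : Continuous (pdy (pdy u)) := huy.continuous_pdy
  have hC : Continuous (pdy (pdx u)) := hux.continuous_pdy
  refine continuous_pi fun i => continuous_pi fun j => ?_
  fin_cases i <;> fin_cases j <;> simp only [shiftedHessian] <;> fun_prop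

theorem Biperiodic.comp_shiftedHessian (hper : Biperiodic u) (φ : Matrix (Fin 2) (Fin 2) ℝ → ℝ) :
    Biperiodic fun z => φ (shiftedHessian L M u z) := by
  intro x y
  simp only [shiftedHessian, (hper.pdx x y).1, (hper.pdy x y).1, (hper.pdx.pdx x y).1,
    (hper.pdx.pdy x y).1, (hper.pdy.pdy x y).1, (hper.pdx x y).2, (hper.pdy x y).2,
    (hper.pdx.pdx x y).2, (hper.pdx.pdy x y).2, (hper.pdy.pdy x y).2, and_self]

theorem shiftedHessian_sub {p q : ℝ × ℝ → ℝ} (hp : ContDiff ℝ 2 p) (hq : ContDiff ℝ 2 q)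
    (z : ℝ × ℝ) :
    shiftedHessian L M (fun z => p z - q z) z =
      shiftedHessian L M p z - shiftedHessian L M q z := by
  simp only [shiftedHessian,
    pdx_sub (hp.differentiable two_ne_zero) (hq.differentiable two_ne_zero),
    pdy_sub (hp.differentiable two_ne_zero) (hq.differentiable two_ne_zero),
    pdx_sub hp.differentiable_pdx hq.differentiable_pdx,
    pdy_sub hp.differentiable_pdx hq.differentiable_pdx,
    pdy_sub hp.differentiable_pdy hq.differentiable_pdy]
  ext i j
  fin_cases i <;> fin_cases j <;>
    simp only [Fin.zero_eta, Fin.mk_one, Matrix.sub_apply, Matrix.smul_apply, Matrix.of_apply,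
      Matrix.cons_val', Matrix.cons_val_zero, Matrix.cons_val_one, Matrix.cons_val_fin_one,
      smul_eq_mul] <;> ring

theorem torusInt_det_shiftedHessian (hLM : ∀ α β : ℝ, (α • L + β • M).det = 0)
    (hu : ContDiff ℝ 2 u) (hper : Biperiodic u) :
    torusInt (fun z => (shiftedHessian L M u z).det) = 0 := by
  have hux : ContDiff ℝ 1 (pdx u) := hu.contDiff_pdx (by norm_num)
  have huy : ContDiff ℝ 1 (pdy u) := hu.contDiff_pdy (by norm_num)
  have hA : Continuous (pdx (pdx u)) := hux.continuous_pdx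
  have hB : Continuous (pdy (pdy u)) := huy.continuous_pdy
  have hC : Continuous (pdy (pdx u)) := hux.continuous_pdy
  have hx := hux.continuous
  have hy := huy.continuous
  have hexpand : ∀ z, (shiftedHessian L M u z).det =
      (pdx (pdx u) z * pdy (pdy u) z - pdy (pdx u) z ^ 2)
        - pdx (pdx u) z * (L 1 1 * pdx u z + M 1 1 * pdy u z)
        - pdy (pdy u) z * (L 0 0 * pdx u z + M 0 0 * pdy u z)
        + pdy (pdx u) z * ((L 0 1 + L 1 0) * pdx u z + (M 0 1 + M 1 0) * pdy u z) := fun z => by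
    have h := hLM (pdx u z) (pdy u z)
    simp only [shiftedHessian, Matrix.det_fin_two, Matrix.add_apply, Matrix.sub_apply,
      Matrix.smul_apply, Matrix.of_apply, Matrix.cons_val', Matrix.cons_val_zero,
      Matrix.cons_val_one, Matrix.cons_val_fin_one, smul_eq_mul] at h ⊢
    linear_combination h
  simp_rw [hexpand]
  rw [torusInt_add (by fun_prop) (by fun_prop), torusInt_sub (by fun_prop) (by fun_prop),
    torusInt_sub (by fun_prop) (by fun_prop), torusInt_sub (by fun_prop) (by fun_prop),
    torusInt_pdx_pdx_mul_pdy_pdy hu hper, torusInt_mul_add_mul hx hy hA,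
    torusInt_mul_add_mul hx hy hB, torusInt_mul_add_mul hx hy hC,
    torusInt_pdx_mul_self hux hper.pdx, torusInt_pdx_pdx_mul_pdy hu hper,
    torusInt_pdy_pdy_mul_pdx hu hper, torusInt_pdy_mul_self huy hper.pdy,
    torusInt_pdy_pdx_mul_pdx hu hper, torusInt_pdy_pdx_mul_pdy hu hper]
  ring

end ShiftedHessian

namespace Matrix.PosDef

variable {P Q : Matrix (Fin 2) (Fin 2) ℝ}

theorem mul_neg_det_sub (hP : P.PosDef) (hQ : Q.PosDef) (h : P.det = Q.det) :
    P 0 0 * Q 0 0 * -(P - Q).det =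
      P.det * (P 0 0 - Q 0 0) ^ 2 + (P 0 0 * Q 0 1 - Q 0 0 * P 0 1) ^ 2 := by
  have hP' : P 1 0 = P 0 1 := by simpa using congrFun₂ hP.isHermitian 0 1
  have hQ' : Q 1 0 = Q 0 1 := by simpa using congrFun₂ hQ.isHermitian 0 1
  simp only [det_fin_two, sub_apply, hP', hQ'] at h ⊢
  linear_combination P 0 0 * (Q 0 0 - P 0 0) * h

theorem det_sub_nonpos (hP : P.PosDef) (hQ : Q.PosDef) (h : P.det = Q.det) :
    (P - Q).det ≤ 0 := by
  have hnn : 0 ≤ P 0 0 * Q 0 0 * -(P - Q).det := by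
    rw [mul_neg_det_sub hP hQ h]
    exact add_nonneg (mul_nonneg hP.det_pos.le (sq_nonneg _)) (sq_nonneg _)
  exact neg_nonneg.mp ((mul_nonneg_iff_of_pos_left (mul_pos hP.diag_pos hQ.diag_pos)).mp hnn)

theorem eq_of_det_sub_eq_zero (hP : P.PosDef) (hQ : Q.PosDef) (h : P.det = Q.det)
    (h₀ : (P - Q).det = 0) : P = Q := by
  have key := mul_neg_det_sub hP hQ h
  rw [h₀, neg_zero, mul_zero, eq_comm] at key
  obtain ⟨hsq₁, hsq₂⟩ := (add_eq_zero_iff_of_nonneg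
    (mul_nonneg hP.det_pos.le (sq_nonneg _)) (sq_nonneg _)).mp key
  have hP₀ : 0 < P 0 0 := hP.diag_pos
  have h00 : P 0 0 = Q 0 0 :=
    sub_eq_zero.mp (pow_eq_zero_iff two_ne_zero |>.mp
      ((mul_eq_zero.mp hsq₁).resolve_left hP.det_pos.ne'))
  have h01 : P 0 1 = Q 0 1 := by
    have := pow_eq_zero_iff two_ne_zero |>.mp hsq₂
    rw [← h00, ← mul_sub] at this
    exact (sub_eq_zero.mp ((mul_eq_zero.mp this).resolve_left hP₀.ne')).symm
  have hP' : P 1 0 = P 0 1 := by simpa using congrFun₂ hP.isHermitian 0 1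
  have hQ' : Q 1 0 = Q 0 1 := by simpa using congrFun₂ hQ.isHermitian 0 1
  have h11 : P 1 1 = Q 1 1 := by
    simp only [det_fin_two, hP', hQ', h00, h01] at h
    exact mul_left_cancel₀ (h00 ▸ hP₀.ne') (by linarith)
  ext i j
  fin_cases i <;> fin_cases j
  exacts [h00, h01, hP'.trans (h01.trans hQ'.symm), h11]

end Matrix.PosDef

theorem apply_add_smul_eq_zero_of_fderiv_apply_eq {E F : Type*} [NormedAddCommGroup E]
    [NormedSpace ℝ E] [NormedAddCommGroup F] [NormedSpace ℝ F] {V : E → F}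
    (hV : Differentiable ℝ V) (v : E) (Λ : F →L[ℝ] F)
    (hΛ : ∀ z, fderiv ℝ V z v = Λ (V z)) {z₀ : E} (h₀ : V z₀ = 0) (t : ℝ) :
    V (z₀ + t • v) = 0 := by
  have hline : ∀ t : ℝ, HasDerivAt (fun t : ℝ => V (z₀ + t • v)) (Λ (V (z₀ + t • v))) t :=
    fun t => by
      rw [← hΛ]
      exact (hV _).hasFDerivAt.comp_hasDerivAt t ((hasDerivAt_id t).smul_const v |>.const_add z₀)
        |>.congr_deriv (by simp)
  have := ODE_solution_unique_univ (v := fun _ => Λ) (s := fun _ => univ) (K := ‖Λ‖₊)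
    (f := fun t : ℝ => V (z₀ + t • v)) (g := fun _ => 0) (t₀ := 0)
    (fun _ => Λ.lipschitz.lipschitzOnWith) (fun t => ⟨hline t, trivial⟩)
    (fun t => ⟨by simpa using hasDerivAt_const t (0 : F), trivial⟩) (by simpa using h₀)
  exact congrFun this t

section Rigidity

variable {L M : Matrix (Fin 2) (Fin 2) ℝ} {u : ℝ × ℝ → ℝ}

theorem fderiv_pdx_prod_pdy_of_shiftedHessian_eq_zero (hu : ContDiff ℝ 2 u)
    (hS : ∀ z, shiftedHessian L M u z = 0) (z : ℝ × ℝ) :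
    fderiv ℝ (fun z => (pdx u z, pdy u z)) z (1, 0) =
        pdx u z • (L 0 0, L 0 1) + pdy u z • (M 0 0, M 0 1) ∧
      fderiv ℝ (fun z => (pdx u z, pdy u z)) z (0, 1) =
        pdx u z • (L 1 0, L 1 1) + pdy u z • (M 1 0, M 1 1) := by
  have hS' : ∀ i j, shiftedHessian L M u z i j = 0 := fun i j => by simp [hS z]
  have h00 := hS' 0 0
  have h01 := hS' 0 1
  have h10 := hS' 1 0
  have h11 := hS' 1 1
  simp only [shiftedHessian, Matrix.sub_apply, Matrix.smul_apply, Matrix.of_apply, Matrix.cons_val',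
    Matrix.cons_val_zero, Matrix.cons_val_one, Matrix.cons_val_fin_one, smul_eq_mul]
    at h00 h01 h10 h11
  rw [DifferentiableAt.fderiv_prodMk (hu.differentiable_pdx z) (hu.differentiable_pdy z)]
  change (pdx (pdx u) z, pdx (pdy u) z) = _ ∧ (pdy (pdx u) z, pdy (pdy u) z) = _
  simp only [pdx_pdy_comm hu, Prod.smul_mk, Prod.mk_add_mk, smul_eq_mul, Prod.mk.injEq]
  refine ⟨⟨?_, ?_⟩, ?_, ?_⟩ <;> linarith

theorem pdx_eq_zero_and_pdy_eq_zero_of_shiftedHessian_eq_zero (hu : ContDiff ℝ 2 u)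
    (hS : ∀ z, shiftedHessian L M u z = 0) {z₀ : ℝ × ℝ} (h₀ : fderiv ℝ u z₀ = 0)
    (z : ℝ × ℝ) : pdx u z = 0 ∧ pdy u z = 0 := by
  have hV : Differentiable ℝ fun z => (pdx u z, pdy u z) :=
    hu.differentiable_pdx.prodMk hu.differentiable_pdy
  let Λ (i : Fin 2) : ℝ × ℝ →L[ℝ] ℝ × ℝ :=
    (ContinuousLinearMap.fst ℝ ℝ ℝ).smulRight (L i 0, L i 1) +
      (ContinuousLinearMap.snd ℝ ℝ ℝ).smulRight (M i 0, M i 1)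
  have h₁ := apply_add_smul_eq_zero_of_fderiv_apply_eq hV (1, 0) (Λ 0)
    (fun z => (fderiv_pdx_prod_pdy_of_shiftedHessian_eq_zero hu hS z).1) (z₀ := z₀)
    (by simp [pdx, pdy, h₀]) (z.1 - z₀.1)
  have h₂ := apply_add_smul_eq_zero_of_fderiv_apply_eq hV (0, 1) (Λ 1)
    (fun z => (fderiv_pdx_prod_pdy_of_shiftedHessian_eq_zero hu hS z).2) h₁ (z.2 - z₀.2)
  have hz : z₀ + (z.1 - z₀.1) • ((1 : ℝ), (0 : ℝ)) + (z.2 - z₀.2) • ((0 : ℝ), (1 : ℝ)) = z :=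
    by ext <;> simp
  rw [hz] at h₂
  exact Prod.mk_eq_zero.mp h₂

theorem exists_const_of_shiftedHessian_eq_zero (hu : ContDiff ℝ 2 u) (hper : Biperiodic u)
    (hS : ∀ z, shiftedHessian L M u z = 0) : ∃ k, ∀ z, u z = k := by
  obtain ⟨z₀, h₀⟩ := hper.exists_fderiv_eq_zero hu.continuous
  refine ⟨u 0, fun z =>
    is_const_of_fderiv_eq_zero (hu.differentiable two_ne_zero) (fun w => ?_) z 0⟩
  obtain ⟨hx, hy⟩ := pdx_eq_zero_and_pdy_eq_zero_of_shiftedHessian_eq_zero hu hS h₀ w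
  exact fderiv_eq_zero_of_pdx_of_pdy hx hy

end Rigidity

theorem exists_const_of_posDef_of_det_eq {N L M : Matrix (Fin 2) (Fin 2) ℝ}
    (hLM : ∀ α β : ℝ, (α • L + β • M).det = 0) {p q : ℝ × ℝ → ℝ}
    (hp : ContDiff ℝ 2 p) (hpper : Biperiodic p) (hq : ContDiff ℝ 2 q) (hqper : Biperiodic q)
    (hposp : ∀ z, (N + shiftedHessian L M p z).PosDef)
    (hposq : ∀ z, (N + shiftedHessian L M q z).PosDef)
    (hdet : ∀ z, (N + shiftedHessian L M p z).det = (N + shiftedHessian L M q z).det) :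
    ∃ k, ∀ z, p z - q z = k := by
  set u : ℝ × ℝ → ℝ := fun z => p z - q z
  have hu : ContDiff ℝ 2 u := hp.sub hq
  have hper : Biperiodic u := hpper.sub hqper
  have hS : ∀ z, N + shiftedHessian L M p z - (N + shiftedHessian L M q z) =
      shiftedHessian L M u z := fun z => by
    rw [shiftedHessian_sub hp hq]
    abel
  have hnonpos : ∀ z, (shiftedHessian L M u z).det ≤ 0 := fun z =>
    hS z ▸ (hposp z).det_sub_nonpos (hposq z) (hdet z)
  have hzero := (hper.comp_shiftedHessian fun S => -S.det).eq_zero_of_torusInt_eq_zero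
    (continuous_shiftedHessian hu).matrix_det.neg (fun z => neg_nonneg.mpr (hnonpos z))
    (by rw [torusInt_neg, torusInt_det_shiftedHessian hLM hu hper, neg_zero])
  refine exists_const_of_shiftedHessian_eq_zero (L := L) (M := M) hu hper fun z => ?_
  have hdet₀ : (shiftedHessian L M u z).det = 0 := neg_eq_zero.mp (congrFun hzero z)
  rw [← hS, (hposp z).eq_of_det_sub_eq_zero (hposq z) (hdet z) (hS z ▸ hdet₀), sub_self]

theorem gma_uniqueness_general (a b c l11 l12 l22 m11 m12 m22 : ℝ)
    (h2 : l11 * l22 - l12 ^ 2 = 0)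
    (h3 : m11 * m22 - m12 ^ 2 = 0)
    (h4 : l11 * m22 + l22 * m11 - 2 * l12 * m12 = 0)
    (F : ℝ × ℝ → ℝ)
    (p q : ℝ × ℝ → ℝ)
    (hp : ContDiff ℝ 2 p) (hpper : Biperiodic p)
    (hq : ContDiff ℝ 2 q) (hqper : Biperiodic q)
    (heqp : ∀ z : ℝ × ℝ,
      (a + pdx (pdx p) z - l11 * pdx p z - m11 * pdy p z) *
          (b + pdy (pdy p) z - l22 * pdx p z - m22 * pdy p z) -
        (c + pdy (pdx p) z - l12 * pdx p z - m12 * pdy p z) ^ 2 = Real.exp (F z))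
    (hposp : ∀ z : ℝ × ℝ,
      (!![a + pdx (pdx p) z - l11 * pdx p z - m11 * pdy p z,
          c + pdy (pdx p) z - l12 * pdx p z - m12 * pdy p z;
          c + pdy (pdx p) z - l12 * pdx p z - m12 * pdy p z,
          b + pdy (pdy p) z - l22 * pdx p z - m22 * pdy p z]).PosDef)
    (heqq : ∀ z : ℝ × ℝ,
      (a + pdx (pdx q) z - l11 * pdx q z - m11 * pdy q z) *
          (b + pdy (pdy q) z - l22 * pdx q z - m22 * pdy q z) -
        (c + pdy (pdx q) z - l12 * pdx q z - m12 * pdy q z) ^ 2 = Real.exp (F z))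
    (hposq : ∀ z : ℝ × ℝ,
      (!![a + pdx (pdx q) z - l11 * pdx q z - m11 * pdy q z,
          c + pdy (pdx q) z - l12 * pdx q z - m12 * pdy q z;
          c + pdy (pdx q) z - l12 * pdx q z - m12 * pdy q z,
          b + pdy (pdy q) z - l22 * pdx q z - m22 * pdy q z]).PosDef) :
    ∃ k : ℝ, ∀ z : ℝ × ℝ, p z - q z = k := by
  set L : Matrix (Fin 2) (Fin 2) ℝ := !![l11, l12; l12, l22]
  set M : Matrix (Fin 2) (Fin 2) ℝ := !![m11, m12; m12, m22]
  have hLM : ∀ α β : ℝ, (α • L + β • M).det = 0 := fun α β => by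
    simp only [L, M, Matrix.det_fin_two, Matrix.add_apply, Matrix.smul_apply, Matrix.of_apply,
      Matrix.cons_val', Matrix.cons_val_zero, Matrix.cons_val_one, Matrix.cons_val_fin_one,
      smul_eq_mul]
    linear_combination α ^ 2 * h2 + β ^ 2 * h3 + α * β * h4
  have hmat : ∀ (f : ℝ × ℝ → ℝ) (z : ℝ × ℝ),
      !![a + pdx (pdx f) z - l11 * pdx f z - m11 * pdy f z,
        c + pdy (pdx f) z - l12 * pdx f z - m12 * pdy f z;
        c + pdy (pdx f) z - l12 * pdx f z - m12 * pdy f z,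
        b + pdy (pdy f) z - l22 * pdx f z - m22 * pdy f z] =
        !![a, c; c, b] + shiftedHessian L M f z := fun f z => by
    ext i j
    fin_cases i <;> fin_cases j <;>
      simp only [shiftedHessian, L, M, Fin.zero_eta, Fin.mk_one, Matrix.add_apply,
        Matrix.sub_apply, Matrix.smul_apply, Matrix.of_apply, Matrix.cons_val',
        Matrix.cons_val_zero, Matrix.cons_val_one, Matrix.cons_val_fin_one, smul_eq_mul] <;> ring
  refine exists_const_of_posDef_of_det_eq hLM hp hpper hq hqper (fun z => hmat p z ▸ hposp z)
    (fun z => hmat q z ▸ hposq z) fun z => ?_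
  rw [← hmat, ← hmat, Matrix.det_fin_two_of, Matrix.det_fin_two_of]
  linear_combination heqp z - heqq z

/-- Uniqueness, modulo additive constants, of solutions of the generalized
Monge–Ampère equation on the 2-torus. -/
theorem gma_uniqueness (a b c l11 l12 l22 m11 m12 m22 : ℝ)
    (hpd : (!![a, c; c, b]).PosDef)
    (h1 : m11 * l22 = 0)
    (h2 : l11 * l22 - l12 ^ 2 = 0)
    (h3 : m11 * m22 - m12 ^ 2 = 0)
    (h4 : l11 * m22 + l22 * m11 - 2 * l12 * m12 = 0)
    (F : ℝ × ℝ → ℝ) (hF : ContDiff ℝ (⊤ : ℕ∞) F) (hFper : Biperiodic F)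
    (p q : ℝ × ℝ → ℝ)
    (hp : ContDiff ℝ 2 p) (hpper : Biperiodic p)
    (hq : ContDiff ℝ 2 q) (hqper : Biperiodic q)
    (heqp : ∀ z : ℝ × ℝ,
      (a + pdx (pdx p) z - l11 * pdx p z - m11 * pdy p z) *
          (b + pdy (pdy p) z - l22 * pdx p z - m22 * pdy p z) -
        (c + pdy (pdx p) z - l12 * pdx p z - m12 * pdy p z) ^ 2 = Real.exp (F z))
    (hposp : ∀ z : ℝ × ℝ,
      (!![a + pdx (pdx p) z - l11 * pdx p z - m11 * pdy p z,
          c + pdy (pdx p) z - l12 * pdx p z - m12 * pdy p z;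
          c + pdy (pdx p) z - l12 * pdx p z - m12 * pdy p z,
          b + pdy (pdy p) z - l22 * pdx p z - m22 * pdy p z]).PosDef)
    (heqq : ∀ z : ℝ × ℝ,
      (a + pdx (pdx q) z - l11 * pdx q z - m11 * pdy q z) *
          (b + pdy (pdy q) z - l22 * pdx q z - m22 * pdy q z) -
        (c + pdy (pdx q) z - l12 * pdx q z - m12 * pdy q z) ^ 2 = Real.exp (F z))
    (hposq : ∀ z : ℝ × ℝ,
      (!![a + pdx (pdx q) z - l11 * pdx q z - m11 * pdy q z,
          c + pdy (pdx q) z - l12 * pdx q z - m12 * pdy q z;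
          c + pdy (pdx q) z - l12 * pdx q z - m12 * pdy q z,
          b + pdy (pdy q) z - l22 * pdx q z - m22 * pdy q z]).PosDef) :
    ∃ k : ℝ, ∀ z : ℝ × ℝ, p z - q z = k :=
  gma_uniqueness_general a b c l11 l12 l22 m11 m12 m22 h2 h3 h4 F p q hp hpper hq hqper heqp hposp
    heqq hposq
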